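/- arXiv:math/0406252 — 5 statements merged into one kernel-verified Lean document; each statement's English description precedes it below -/
import Mathlib

section
/- For every integer k ≥ 1 there exist 4·Δ(k) = 2k(k+1) points lying in a closed equilateral triangle of side length 2k − 2 + √3 in the Euclidean plane such that every two distinct points among them are at distance at least 1. (Equivalently, in the paper's normalization, d(4Δ(k)) ≥ 1/(2k − 2 + √3).) -/
/-!
Describe a point of the triangle with vertices `V 0, V 1, V 2` by barycentric weights `w`
scaled to sum to the side `s = 2m + √3` (`m = k - 1`). For an equilateral triangle of side `s`,
two such points are at distance `√(∑ (w - w')² / 2)`.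

Put a triangular block of `Δ(k)` points into each corner `c`, with weights `n + (m + √3) e_c`,
and an inverted block into the middle, with weights `(m + √3/3) 𝟙 - n`; here `n` runs over the
`ℕ`-vectors of sum `m` (the multiplicity vectors of `σ : Sym (Fin 3) m`). Within a block, weight
differences are nonzero integer vectors of sum `0`, so `∑ (w - w')² ≥ 2`. Points of different
blocks differ by at least `2/√3` in the weight of some corner, and since the differences sum to
`0`, this again forces `∑ (w - w')² ≥ 2`.
-/

open Finset Real

section RegularSimplex

variable {ι E : Type*} [Fintype ι] [NormedAddCommGroup E] [InnerProductSpace ℝ E]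

theorem norm_sum_smul_sq_of_sum_eq_zero (V : ι → E) {δ : ι → ℝ} (hδ : ∑ i, δ i = 0) :
    ‖∑ i, δ i • V i‖ ^ 2 = -(∑ i, ∑ j, δ i * δ j * ‖V i - V j‖ ^ 2) / 2 := by
  have hleft : ∑ i, ∑ j, δ i * δ j * ‖V i‖ ^ 2 = 0 := by
    simp_rw [mul_right_comm _ _ (‖_‖ ^ 2), ← mul_sum, hδ, mul_zero, sum_const_zero]
  have hright : ∑ i, ∑ j, δ i * δ j * ‖V j‖ ^ 2 = 0 := by
    simp_rw [mul_assoc, ← mul_sum, ← sum_mul, hδ, zero_mul]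
  have hinner : ‖∑ i, δ i • V i‖ ^ 2 = ∑ i, ∑ j, δ i * δ j * inner ℝ (V i) (V j) := by
    simp_rw [← real_inner_self_eq_norm_sq, sum_inner, inner_sum, real_inner_smul_left,
      real_inner_smul_right, mul_assoc]
  have hcross :
      ∑ i, ∑ j, δ i * δ j * (2 * inner ℝ (V i) (V j)) = 2 * ‖∑ i, δ i • V i‖ ^ 2 := by
    simp_rw [hinner, mul_sum]
    exact sum_congr rfl fun i _ => sum_congr rfl fun j _ => by ring
  simp_rw [norm_sub_sq_real, mul_add, mul_sub, sum_add_distrib, sum_sub_distrib,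
    hleft, hright, hcross]
  ring

variable [DecidableEq ι] {V : ι → E} {s : ℝ}

theorem norm_sum_smul_sq_of_pairwise_dist_eq (hV : Pairwise fun i j => dist (V i) (V j) = s)
    {δ : ι → ℝ} (hδ : ∑ i, δ i = 0) :
    ‖∑ i, δ i • V i‖ ^ 2 = s ^ 2 / 2 * ∑ i, δ i ^ 2 := by
  have hdist : ∀ i j, ‖V i - V j‖ ^ 2 = s ^ 2 - if i = j then s ^ 2 else 0 := by
    intro i j
    rcases eq_or_ne i j with rfl | hij
    · simp
    · simp [hij, ← dist_eq_norm, hV hij]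
  have hconst : ∑ i, ∑ j, δ i * δ j * s ^ 2 = 0 := by
    simp_rw [mul_assoc, ← mul_sum, ← sum_mul, hδ, zero_mul]
  simp_rw [norm_sum_smul_sq_of_sum_eq_zero V hδ, hdist, mul_sub, sum_sub_distrib, hconst,
    mul_ite, mul_zero, sum_ite_eq, mem_univ, if_true, zero_sub, neg_neg, sum_div, mul_sum]
  exact sum_congr rfl fun i _ => by ring

theorem dist_centerMass_sq_of_pairwise_dist_eq (hV : Pairwise fun i j => dist (V i) (V j) = s)
    (hs : s ≠ 0) {w w' : ι → ℝ} (hw : ∑ i, w i = s) (hw' : ∑ i, w' i = s) :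
    dist (univ.centerMass w V) (univ.centerMass w' V) ^ 2 = (∑ i, (w i - w' i) ^ 2) / 2 := by
  have hdiff : univ.centerMass w V - univ.centerMass w' V = s⁻¹ • ∑ i, (w i - w' i) • V i := by
    simp only [centerMass, hw, hw', sub_smul, sum_sub_distrib, smul_sub]
  have hδ : ∑ i, (w i - w' i) = 0 := by rw [sum_sub_distrib, hw, hw', sub_self]
  rw [dist_eq_norm, hdiff, norm_smul, mul_pow, norm_sum_smul_sq_of_pairwise_dist_eq hV hδ,
    Real.norm_eq_abs, sq_abs]
  field_simp

end RegularSimplex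

theorem two_le_sum_sq_of_sum_eq_zero {ι : Type*} [Fintype ι] {z : ι → ℤ}
    (hsum : ∑ i, z i = 0) (hz : z ≠ 0) : 2 ≤ ∑ i, z i ^ 2 := by
  classical
  obtain ⟨i, hi⟩ := Function.ne_iff.mp hz
  obtain ⟨j, hji, hj⟩ : ∃ j, j ≠ i ∧ z j ≠ 0 := by
    by_contra! h
    exact hi (by rwa [sum_eq_single i (fun j _ hj => h j hj) (by simp)] at hsum)
  have one_le_sq : ∀ x : ℤ, x ≠ 0 → 1 ≤ x ^ 2 := fun x hx => by
    have : 0 < x ^ 2 := by positivity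
    omega
  calc 2 ≤ z j ^ 2 + z i ^ 2 := by linarith [one_le_sq _ hi, one_le_sq _ hj]
    _ = ∑ l ∈ {j, i}, z l ^ 2 := by rw [sum_pair hji]
    _ ≤ ∑ l, z l ^ 2 := sum_le_sum_of_subset_of_nonneg (subset_univ _) fun l _ _ => sq_nonneg _

theorem mul_sq_le_sum_sq_of_sum_eq_zero {δ : Fin 3 → ℝ} (hδ : ∑ i, δ i = 0) (c : Fin 3) :
    3 / 2 * δ c ^ 2 ≤ ∑ i, δ i ^ 2 := by
  rw [Fin.sum_univ_three] at hδ ⊢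
  fin_cases c <;> simp only [Fin.zero_eta, Fin.mk_one, Fin.reduceFinMk] <;>
    nlinarith [sq_nonneg (δ 0 - δ 1), sq_nonneg (δ 0 - δ 2), sq_nonneg (δ 1 - δ 2),
      mul_eq_zero_of_left hδ (δ 0), mul_eq_zero_of_left hδ (δ 1), mul_eq_zero_of_left hδ (δ 2)]

theorem Sym.count_coe_le {α : Type*} [DecidableEq α] {n : ℕ} (σ : Sym α n) (a : α) :
    (σ : Multiset α).count a ≤ n := by
  simpa using Multiset.count_le_card a (σ : Multiset α)

theorem exists_equilateral_triangle {s : ℝ} (hs : 0 ≤ s) :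
    ∃ a b c : EuclideanSpace ℝ (Fin 2), dist a b = s ∧ dist a c = s ∧ dist b c = s := by
  have h3 : √3 ^ 2 = 3 := sq_sqrt (by norm_num)
  refine ⟨!₂[0, 0], !₂[s, 0], !₂[s / 2, s * √3 / 2], ?_, ?_, ?_⟩ <;>
    rw [EuclideanSpace.dist_eq, sqrt_eq_iff_eq_sq (by positivity) hs] <;>
    simp [Fin.sum_univ_two, Real.dist_eq, sq_abs] <;>
    linear_combination (s ^ 2 / 4) * h3

noncomputable def packingWeight (m : ℕ) : Option (Fin 3) → Sym (Fin 3) m → Fin 3 → ℝ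
  | some c, σ, d => (σ : Multiset (Fin 3)).count d + if d = c then m + √3 else 0
  | none, σ, d => m + √3 / 3 - (σ : Multiset (Fin 3)).count d

namespace packingWeight

variable {m : ℕ}

theorem nonneg (β : Option (Fin 3)) (σ : Sym (Fin 3) m) (d : Fin 3) :
    0 ≤ packingWeight m β σ d := by
  cases β with
  | none =>
    have : ((σ : Multiset (Fin 3)).count d : ℝ) ≤ m := by exact_mod_cast σ.count_coe_le d
    rw [packingWeight]
    linarith [sqrt_nonneg 3]
  | some c => rw [packingWeight]; positivity

theorem sum_eq (β : Option (Fin 3)) (σ : Sym (Fin 3) m) :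
    ∑ d, packingWeight m β σ d = 2 * m + √3 := by
  have hcount : ∑ d, ((σ : Multiset (Fin 3)).count d : ℝ) = m := by exact_mod_cast (by simp)
  cases β with
  | none =>
    simp only [packingWeight, sum_sub_distrib, hcount, sum_const, card_univ, Fintype.card_fin,
      nsmul_eq_mul]
    ring
  | some c =>
    simp only [packingWeight, sum_add_distrib, hcount, sum_ite_eq', mem_univ, if_true]
    ring

theorem two_le_sum_sq_sub_of_ne (β : Option (Fin 3)) {σ σ' : Sym (Fin 3) m} (h : σ ≠ σ') :
    2 ≤ ∑ d, (packingWeight m β σ d - packingWeight m β σ' d) ^ 2 := by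
  set z : Fin 3 → ℤ := fun d => (σ : Multiset (Fin 3)).count d - (σ' : Multiset (Fin 3)).count d
  have hz : z ≠ 0 := fun hz => h <| Sym.coe_injective <| Multiset.ext.mpr fun d => by
    simpa [z, sub_eq_zero] using congrFun hz d
  have hsum : ∑ d, z d = 0 := by simp [z, sum_sub_distrib, ← Nat.cast_sum]
  have hsq : ∀ d, (packingWeight m β σ d - packingWeight m β σ' d) ^ 2 = ((z d ^ 2 : ℤ) : ℝ) := by
    intro d
    cases β <;> simp only [packingWeight, z] <;> push_cast <;> ring
  simp_rw [hsq]
  exact_mod_cast two_le_sum_sq_of_sum_eq_zero hsum hz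

theorem two_le_sum_sq_sub_of_ne_some {β : Option (Fin 3)} {c : Fin 3} (h : β ≠ some c)
    (σ σ' : Sym (Fin 3) m) :
    2 ≤ ∑ d, (packingWeight m (some c) σ d - packingWeight m β σ' d) ^ 2 := by
  have hcorner : m + √3 ≤ packingWeight m (some c) σ c := by
    rw [packingWeight, if_pos rfl]
    linarith [((σ : Multiset (Fin 3)).count c).cast_nonneg (α := ℝ)]
  have hother : packingWeight m β σ' c ≤ m + √3 / 3 := by
    have : ((σ' : Multiset (Fin 3)).count c : ℝ) ≤ m := by exact_mod_cast σ'.count_coe_le c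
    cases β with
    | none =>
      rw [packingWeight]
      linarith [((σ' : Multiset (Fin 3)).count c).cast_nonneg (α := ℝ)]
    | some c' =>
      rw [packingWeight, if_neg (by rintro rfl; exact h rfl)]
      linarith [sqrt_nonneg 3]
  have hgap : (2 * √3 / 3) ^ 2 ≤ (packingWeight m (some c) σ c - packingWeight m β σ' c) ^ 2 :=
    pow_le_pow_left₀ (by positivity) (by linarith) 2
  have h3 : √3 ^ 2 = 3 := sq_sqrt (by norm_num)
  have hδ : ∑ d, (packingWeight m (some c) σ d - packingWeight m β σ' d) = 0 := by
    rw [sum_sub_distrib, sum_eq, sum_eq, sub_self]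
  nlinarith [mul_sq_le_sum_sq_of_sum_eq_zero hδ c]

theorem two_le_sum_sq_sub {q q' : Option (Fin 3) × Sym (Fin 3) m} (h : q ≠ q') :
    2 ≤ ∑ d, (packingWeight m q.1 q.2 d - packingWeight m q'.1 q'.2 d) ^ 2 := by
  obtain ⟨β, σ⟩ := q
  obtain ⟨β', σ'⟩ := q'
  by_cases hβ : β = β'
  · subst hβ
    exact two_le_sum_sq_sub_of_ne β (by rintro rfl; exact h rfl)
  cases β with
  | some c => exact two_le_sum_sq_sub_of_ne_some (Ne.symm hβ) σ σ'
  | none =>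
    obtain ⟨c', rfl⟩ := Option.ne_none_iff_exists'.mp (Ne.symm hβ)
    simpa only [sub_sq_comm] using two_le_sum_sq_sub_of_ne_some hβ σ' σ

end packingWeight

section Packing

variable {E : Type*}

noncomputable def packingPoint [AddCommGroup E] [Module ℝ E] (V : Fin 3 → E) (m : ℕ)
    (q : Option (Fin 3) × Sym (Fin 3) m) : E :=
  univ.centerMass (packingWeight m q.1 q.2) V

theorem packingPoint_mem_convexHull [AddCommGroup E] [Module ℝ E] (V : Fin 3 → E) (m : ℕ)
    (q : Option (Fin 3) × Sym (Fin 3) m) : packingPoint V m q ∈ convexHull ℝ (Set.range V) :=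
  univ.centerMass_mem_convexHull (fun d _ => packingWeight.nonneg _ _ d)
    (by rw [packingWeight.sum_eq]; positivity) fun d _ => Set.mem_range_self d

theorem one_le_dist_packingPoint [NormedAddCommGroup E] [InnerProductSpace ℝ E]
    {V : Fin 3 → E} {m : ℕ} (hV : Pairwise fun i j => dist (V i) (V j) = 2 * m + √3)
    {q q' : Option (Fin 3) × Sym (Fin 3) m} (h : q ≠ q') :
    1 ≤ dist (packingPoint V m q) (packingPoint V m q') := by
  have hsq := dist_centerMass_sq_of_pairwise_dist_eq hV (by positivity)
    (packingWeight.sum_eq q.1 q.2) (packingWeight.sum_eq q'.1 q'.2)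
  rw [← one_le_sq_iff₀ dist_nonneg, packingPoint, packingPoint, hsq]
  linarith [packingWeight.two_le_sum_sq_sub h]

end Packing

theorem card_option_fin_three_prod_sym (m : ℕ) :
    Fintype.card (Option (Fin 3) × Sym (Fin 3) m) = 2 * (m + 1) * (m + 2) := by
  rw [Fintype.card_prod, Fintype.card_option, Fintype.card_fin, Sym.card_sym_eq_choose,
    Fintype.card_fin, show 3 + m - 1 = m + 2 by omega, Nat.choose_symm_add, Nat.choose_two_right]
  obtain ⟨r, hr⟩ := (Nat.even_mul_pred_self (m + 2)).two_dvd
  rw [hr, Nat.mul_div_cancel_left r two_pos]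
  rw [show m + 2 - 1 = m + 1 by omega] at hr
  linarith

/-- **Packings of `4Δ(k)` points.**
For every integer `k ≥ 1` there exist `4·Δ(k) = 2k(k+1)` points lying in a
closed equilateral triangle of side length `2k − 2 + √3` (the convex hull of
three points at pairwise distance `2k − 2 + √3`) such that every two distinct
points among them are at distance at least `1`. -/
theorem four_triangular_packing (k : ℕ) (hk : 1 ≤ k) :
    ∃ (a b c : EuclideanSpace ℝ (Fin 2))
      (P : Fin (2 * k * (k + 1)) → EuclideanSpace ℝ (Fin 2)),
      dist a b = 2 * (k : ℝ) - 2 + Real.sqrt 3 ∧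
      dist a c = 2 * (k : ℝ) - 2 + Real.sqrt 3 ∧
      dist b c = 2 * (k : ℝ) - 2 + Real.sqrt 3 ∧
      (∀ i, P i ∈ convexHull ℝ ({a, b, c} : Set (EuclideanSpace ℝ (Fin 2)))) ∧
      (∀ i j, i ≠ j → 1 ≤ dist (P i) (P j)) := by
  obtain ⟨m, rfl⟩ := Nat.exists_eq_add_of_le' hk
  rw [show 2 * ((m + 1 : ℕ) : ℝ) - 2 + √3 = 2 * m + √3 by push_cast; ring]
  obtain ⟨a, b, c, hab, hac, hbc⟩ := exists_equilateral_triangle (s := 2 * m + √3) (by positivity)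
  have hV : Pairwise fun i j => dist (![a, b, c] i) (![a, b, c] j) = 2 * m + √3 := by
    intro i j hij
    fin_cases i <;> fin_cases j <;> simp_all [dist_comm]
  have hrange : Set.range ![a, b, c] = {a, b, c} := by
    rw [Matrix.range_cons, Matrix.range_cons_cons_empty, Set.singleton_union]
  let e := (Fintype.equivFinOfCardEq (card_option_fin_three_prod_sym m)).symm
  exact ⟨a, b, c, packingPoint ![a, b, c] m ∘ e, hab, hac, hbc,
    fun i => hrange ▸ packingPoint_mem_convexHull _ m (e i),
    fun i j hij => one_le_dist_packingPoint hV (e.injective.ne hij)⟩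
end

section
/- For every integer k ≥ 1 there exist 2Δ(k+1) + 2Δ(k) − 1 = 2(k+1)² − 1 points lying in a closed equilateral triangle of side length 2k − 1 + √3 in the Euclidean plane such that every two distinct points among them are at distance at least 1. (Equivalently, in the paper's normalization, d(2Δ(k+1) + 2Δ(k) − 1) ≥ 1/(2k − 1 + √3).) -/
/-!
Fill the triangle of side `2k − 1 + √3` with four patches of the unit triangular lattice: blocks
of `Δ(k+1)` points at the two bottom vertices, a block of `Δ(k)` points at the top vertex, and an
inverted block of `Δ(k)` points between the two bottom blocks, each of its rows half a unit above
a row of theirs. Within a patch, distances are at least `1` because `a² + ab + b² ≥ 1` for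
integers `(a, b) ≠ (0, 0)`. The two bottom blocks are only `√3 − 1` apart along the base, so the
left one gives up the last point of its two lowest rows; a single point fits back into the gap at
height `1/2`, which leaves `2Δ(k+1) + 2Δ(k) − 1 = 2(k+1)² − 1` points. Different patches are
separated by comparing rows: the vertical offsets are multiples of `√3/2`, shifted by `1/2`
between the corner blocks and the inverted block.
-/

open Real Finset

namespace TriangularPacking

section Lattice

variable {V : Type*} [NormedAddCommGroup V] [InnerProductSpace ℝ V]

lemma one_le_sq_add_mul_add_sq {a b : ℤ} (h : a ≠ 0 ∨ b ≠ 0) : 1 ≤ a ^ 2 + a * b + b ^ 2 := by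
  have : 0 < a ^ 2 + b ^ 2 := by
    rcases h with h | h <;> positivity
  nlinarith [sq_nonneg (a + b)]

lemma one_le_norm_intCast_smul_add_intCast_smul {e₁ e₂ : V} (h₁ : ‖e₁‖ = 1) (h₂ : ‖e₂‖ = 1)
    (h₁₂ : inner ℝ e₁ e₂ = 1 / 2) {a b : ℤ} (hab : a ≠ 0 ∨ b ≠ 0) :
    1 ≤ ‖(a : ℝ) • e₁ + (b : ℝ) • e₂‖ := by
  have hsq : ‖(a : ℝ) • e₁ + (b : ℝ) • e₂‖ ^ 2 = ((a ^ 2 + a * b + b ^ 2 : ℤ) : ℝ) := by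
    rw [norm_add_sq_real, norm_smul, norm_smul, real_inner_smul_left, real_inner_smul_right,
      h₁, h₂, h₁₂]
    simp only [Real.norm_eq_abs, mul_pow, sq_abs]
    push_cast
    ring
  have h1 : (1 : ℝ) ≤ ((a ^ 2 + a * b + b ^ 2 : ℤ) : ℝ) := by
    exact_mod_cast one_le_sq_add_mul_add_sq hab
  nlinarith [norm_nonneg ((a : ℝ) • e₁ + (b : ℝ) • e₂)]

def latticePt (o e₁ e₂ : V) (p : ℕ × ℕ) : V := o + (p.1 : ℝ) • e₁ + (p.2 : ℝ) • e₂

lemma one_le_dist_latticePt {e₁ e₂ : V} (h₁ : ‖e₁‖ = 1) (h₂ : ‖e₂‖ = 1)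
    (h₁₂ : inner ℝ e₁ e₂ = 1 / 2) (o : V) {p q : ℕ × ℕ} (hpq : p ≠ q) :
    1 ≤ dist (latticePt o e₁ e₂ p) (latticePt o e₁ e₂ q) := by
  have hne : (p.1 - q.1 : ℤ) ≠ 0 ∨ (p.2 - q.2 : ℤ) ≠ 0 := by
    by_contra! h
    exact hpq (Prod.ext (by omega) (by omega))
  have hdiff : latticePt o e₁ e₂ p - latticePt o e₁ e₂ q =
      ((p.1 - q.1 : ℤ) : ℝ) • e₁ + ((p.2 - q.2 : ℤ) : ℝ) • e₂ := by
    simp only [latticePt]; push_cast; module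
  rw [dist_eq_norm, hdiff]
  exact one_le_norm_intCast_smul_add_intCast_smul h₁ h₂ h₁₂ hne

end Lattice

def tri (m : ℕ) : Finset (ℕ × ℕ) := (range m ×ˢ range m).filter (fun p => p.1 + p.2 < m)

lemma mem_tri {m i j : ℕ} : (i, j) ∈ tri m ↔ i + j < m := by
  simp only [tri, mem_filter, mem_product, mem_range]; omega

lemma two_mul_card_tri (m : ℕ) : 2 * #(tri m) = m * (m + 1) := by
  induction m with
  | zero => rfl
  | succ m ih =>
    have hunion : tri (m + 1) = tri m ∪ antidiagonal m := by
      ext ⟨i, j⟩; simp only [mem_union, mem_tri, HasAntidiagonal.mem_antidiagonal]; omega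
    have hdisj : Disjoint (tri m) (antidiagonal m) := by
      rw [Finset.disjoint_left]; rintro ⟨i, j⟩
      simp only [mem_tri, HasAntidiagonal.mem_antidiagonal]; omega
    rw [hunion, card_union_of_disjoint hdisj, Finset.Nat.card_antidiagonal]
    linarith

def leftIdx (k : ℕ) : Finset (ℕ × ℕ) := tri (k + 1) \ {(k, 0), (k - 1, 1)}

lemma mem_leftIdx {k i j : ℕ} : (i, j) ∈ leftIdx k ↔ i + j ≤ k ∧ (j ≤ 1 → i + j < k) := by
  simp only [leftIdx, mem_sdiff, mem_tri, mem_insert, mem_singleton, Prod.mk.injEq]; omega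

lemma card_leftIdx {k : ℕ} (hk : 1 ≤ k) : #(leftIdx k) = #(tri (k + 1)) - 2 := by
  rw [leftIdx, card_sdiff_of_subset, card_pair (by simp)]
  intro p hp
  simp only [mem_insert, mem_singleton] at hp
  rcases hp with rfl | rfl <;> simp only [mem_tri] <;> omega

lemma mem_convexHull_triple {V : Type*} [AddCommGroup V] [Module ℝ V] {a b c x : V}
    {α β γ : ℝ} (hα : 0 ≤ α) (hβ : 0 ≤ β) (hγ : 0 ≤ γ) (h1 : α + β + γ = 1)
    (hx : α • a + β • b + γ • c = x) : x ∈ convexHull ℝ {a, b, c} := by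
  refine mem_convexHull_of_exists_fintype ![α, β, γ] ![a, b, c] ?_ ?_ ?_ ?_
  · intro i; fin_cases i <;> assumption
  · simpa [Fin.sum_univ_three] using h1
  · intro i; fin_cases i <;> simp
  · simpa [Fin.sum_univ_three, add_assoc] using hx

local notation "ℝ²" => EuclideanSpace ℝ (Fin 2)

noncomputable def pt (x y : ℝ) : ℝ² := !₂[x, y]

lemma dist_pt (x₁ y₁ x₂ y₂ : ℝ) :
    dist (pt x₁ y₁) (pt x₂ y₂) = √((x₁ - x₂) ^ 2 + (y₁ - y₂) ^ 2) := by
  simp [pt, EuclideanSpace.dist_eq, Fin.sum_univ_two, Real.dist_eq, sq_abs]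

lemma norm_pt (x y : ℝ) : ‖pt x y‖ = √(x ^ 2 + y ^ 2) := by
  simp [pt, EuclideanSpace.norm_eq, Fin.sum_univ_two, sq_abs]

lemma inner_pt (a b c d : ℝ) : inner ℝ (pt a b) (pt c d) = a * c + b * d := by
  simp [pt, PiLp.inner_apply, Fin.sum_univ_two]; ring

lemma latticePt_pt (x y a b c d : ℝ) (i j : ℕ) :
    latticePt (pt x y) (pt a b) (pt c d) (i, j) = pt (x + i * a + j * c) (y + i * b + j * d) := by
  ext n; fin_cases n <;> simp [latticePt, pt]

lemma one_le_dist_pt {x₁ y₁ x₂ y₂ a b : ℝ} (ha : 0 ≤ a) (hb : 0 ≤ b) (hab : 1 ≤ a ^ 2 + b ^ 2)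
    (hx : a ≤ |x₁ - x₂|) (hy : b ≤ |y₁ - y₂|) : 1 ≤ dist (pt x₁ y₁) (pt x₂ y₂) := by
  rw [dist_pt, ← sq_abs (x₁ - x₂), ← sq_abs (y₁ - y₂)]
  apply Real.one_le_sqrt.mpr
  nlinarith [pow_le_pow_left₀ ha hx 2, pow_le_pow_left₀ hb hy 2]

lemma one_le_dist_pt_of_fst {x₁ y₁ x₂ y₂ : ℝ} (h : 1 ≤ |x₁ - x₂|) :
    1 ≤ dist (pt x₁ y₁) (pt x₂ y₂) :=
  one_le_dist_pt zero_le_one le_rfl (by norm_num) h (abs_nonneg _)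

lemma one_le_dist_pt_of_snd {x₁ y₁ x₂ y₂ : ℝ} (h : 1 ≤ |y₁ - y₂|) :
    1 ≤ dist (pt x₁ y₁) (pt x₂ y₂) :=
  one_le_dist_pt le_rfl zero_le_one (by norm_num) (abs_nonneg _) h

lemma sq_sqrt_three : √3 ^ 2 = 3 := sq_sqrt (by norm_num)

lemma three_halves_le_sqrt_three : 3 / 2 ≤ √3 :=
  Real.le_sqrt_of_sq_le (by norm_num)

lemma pt_mem_convexHull_triangle {L x y : ℝ} (hL : 0 < L) (hy : 0 ≤ y) (hx₁ : y ≤ √3 * x)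
    (hx₂ : y ≤ √3 * (L - x)) :
    pt x y ∈ convexHull ℝ {pt 0 0, pt L 0, pt (L / 2) (L * √3 / 2)} := by
  have h3 := sq_sqrt_three
  have scale {a b : ℝ} (h : a ≤ √3 * b) : √3 * a ≤ 3 * b := by
    simpa [← mul_assoc, mul_self_sqrt] using mul_le_mul_of_nonneg_left h (sqrt_nonneg 3)
  refine mem_convexHull_triple (α := (3 * L - 3 * x - √3 * y) / (3 * L))
    (β := (3 * x - √3 * y) / (3 * L)) (γ := 2 * √3 * y / (3 * L)) ?_ ?_ (by positivity) ?_ ?_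
  · exact div_nonneg (by linarith [scale hx₂]) (by positivity)
  · exact div_nonneg (by linarith [scale hx₁]) (by positivity)
  · field_simp; ring
  · ext n; fin_cases n
    · simp [pt]; field_simp; ring
    · simp [pt]; field_simp; linear_combination y * h3

lemma dist_vertices_equilateral {L : ℝ} (hL : 0 ≤ L) :
    dist (pt 0 0) (pt L 0) = L ∧ dist (pt 0 0) (pt (L / 2) (L * √3 / 2)) = L ∧
      dist (pt L 0) (pt (L / 2) (L * √3 / 2)) = L := by
  have h3 := sq_sqrt_three
  refine ⟨?_, ?_, ?_⟩ <;> rw [dist_pt, sqrt_eq_iff_eq_sq (by positivity) hL]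
  · ring
  · linear_combination (L ^ 2 / 4) * h3
  · linear_combination (L ^ 2 / 4) * h3

noncomputable def side (k : ℕ) : ℝ := 2 * k - 1 + √3

lemma side_pos (k : ℕ) : 0 < side k := by
  have := three_halves_le_sqrt_three
  have := k.cast_nonneg (α := ℝ)
  unfold side; linarith

noncomputable def leftBlock (p : ℕ × ℕ) : ℝ² :=
  latticePt (pt 0 0) (pt 1 0) (pt (1 / 2) (√3 / 2)) p

noncomputable def rightBlock (k : ℕ) (p : ℕ × ℕ) : ℝ² :=
  latticePt (pt (side k) 0) (pt (-1) 0) (pt (-1 / 2) (√3 / 2)) p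

noncomputable def topBlock (k : ℕ) (p : ℕ × ℕ) : ℝ² :=
  latticePt (pt (side k / 2) (side k * √3 / 2)) (pt (1 / 2) (-√3 / 2)) (pt (-1 / 2) (-√3 / 2)) p

noncomputable def midBlock (k : ℕ) (p : ℕ × ℕ) : ℝ² :=
  latticePt (pt (side k / 2) ((1 + √3) / 2)) (pt (1 / 2) (√3 / 2)) (pt (-1 / 2) (√3 / 2)) p

noncomputable def gapPt (k : ℕ) : ℝ² := pt (side k / 2 - 1 / 2) (1 / 2)

lemma leftBlock_eq (i j : ℕ) : leftBlock (i, j) = pt (i + j / 2) (j * √3 / 2) := by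
  rw [leftBlock, latticePt_pt]; congr 1 <;> ring

lemma rightBlock_eq (k i j : ℕ) : rightBlock k (i, j) = pt (side k - i - j / 2) (j * √3 / 2) := by
  rw [rightBlock, latticePt_pt]; congr 1 <;> ring

lemma topBlock_eq (k i j : ℕ) :
    topBlock k (i, j) = pt (side k / 2 + (i - j) / 2) (side k * √3 / 2 - (i + j) * √3 / 2) := by
  rw [topBlock, latticePt_pt]; congr 1 <;> ring

lemma midBlock_eq (k i j : ℕ) :
    midBlock k (i, j) = pt (side k / 2 + (i - j) / 2) ((1 + √3) / 2 + (i + j) * √3 / 2) := by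
  rw [midBlock, latticePt_pt]; congr 1 <;> ring

lemma one_le_dist_latticePt_pt {a b c d : ℝ} (h₁ : a ^ 2 + b ^ 2 = 1) (h₂ : c ^ 2 + d ^ 2 = 1)
    (h₁₂ : a * c + b * d = 1 / 2) (o : ℝ²) {p q : ℕ × ℕ} (hpq : p ≠ q) :
    1 ≤ dist (latticePt o (pt a b) (pt c d) p) (latticePt o (pt a b) (pt c d) q) :=
  one_le_dist_latticePt (by rw [norm_pt, h₁, sqrt_one]) (by rw [norm_pt, h₂, sqrt_one])
    (by rw [inner_pt, h₁₂]) o hpq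

lemma one_le_dist_leftBlock {p q : ℕ × ℕ} (hpq : p ≠ q) : 1 ≤ dist (leftBlock p) (leftBlock q) :=
  one_le_dist_latticePt_pt (by norm_num) (by linear_combination sq_sqrt_three / 4) (by ring) _ hpq

lemma one_le_dist_rightBlock (k : ℕ) {p q : ℕ × ℕ} (hpq : p ≠ q) :
    1 ≤ dist (rightBlock k p) (rightBlock k q) :=
  one_le_dist_latticePt_pt (by norm_num) (by linear_combination sq_sqrt_three / 4) (by ring) _ hpq

lemma one_le_dist_topBlock (k : ℕ) {p q : ℕ × ℕ} (hpq : p ≠ q) :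
    1 ≤ dist (topBlock k p) (topBlock k q) :=
  one_le_dist_latticePt_pt (by linear_combination sq_sqrt_three / 4)
    (by linear_combination sq_sqrt_three / 4) (by linear_combination sq_sqrt_three / 4) _ hpq

lemma one_le_dist_midBlock (k : ℕ) {p q : ℕ × ℕ} (hpq : p ≠ q) :
    1 ≤ dist (midBlock k p) (midBlock k q) :=
  one_le_dist_latticePt_pt (by linear_combination sq_sqrt_three / 4)
    (by linear_combination sq_sqrt_three / 4) (by linear_combination sq_sqrt_three / 4) _ hpq

lemma one_le_dist_pt_midBlock {k : ℕ} {x : ℝ} {j a b : ℕ}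
    (hx : (√3 - 1 + j - (a + b)) / 2 ≤ |x - (side k / 2 + (a - b) / 2)|) :
    1 ≤ dist (pt x (j * √3 / 2)) (midBlock k (a, b)) := by
  have hs := three_halves_le_sqrt_three
  rw [midBlock_eq]
  -- row `a + b` of the inverted block lies half a unit above row `a + b + 1` of a corner block
  rcases (show j ≤ a + b ∨ j = a + b + 1 ∨ j = a + b + 2 ∨ a + b + 3 ≤ j by omega)
    with h | h | h | h
  · have h : (j : ℝ) ≤ a + b := by exact_mod_cast h
    apply one_le_dist_pt_of_snd
    rw [abs_sub_comm]
    exact le_abs.2 (.inl (by nlinarith [mul_nonneg (sub_nonneg.2 h) (sqrt_nonneg 3)]))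
  · have h : (j : ℝ) = a + b + 1 := by exact_mod_cast h
    rw [h] at hx ⊢
    refine one_le_dist_pt (a := √3 / 2) (b := 1 / 2) (by positivity) (by norm_num)
      (by norm_num [div_pow, sq_sqrt_three]) (by linarith) ?_
    exact le_abs.2 (.inr (by linarith))
  · have h : (j : ℝ) = a + b + 2 := by exact_mod_cast h
    rw [h] at hx
    exact one_le_dist_pt_of_fst (by linarith)
  · have h : (a : ℝ) + b + 3 ≤ j := by exact_mod_cast h
    apply one_le_dist_pt_of_snd
    exact le_abs.2 (.inl (by nlinarith [mul_nonneg (sub_nonneg.2 h) (sqrt_nonneg 3)]))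

lemma one_le_dist_pt_gapPt {k : ℕ} {x : ℝ} {j : ℕ}
    (hx : j ≤ 1 → (√3 + j) / 2 ≤ |x - (side k / 2 - 1 / 2)|) :
    1 ≤ dist (pt x (j * √3 / 2)) (gapPt k) := by
  have hs := three_halves_le_sqrt_three
  rw [gapPt]
  rcases (show j = 0 ∨ j = 1 ∨ 2 ≤ j by omega) with rfl | rfl | h
  · refine one_le_dist_pt (a := √3 / 2) (b := 1 / 2) (by positivity) (by norm_num)
      (by norm_num [div_pow, sq_sqrt_three]) (by simpa using hx (by norm_num)) ?_
    norm_num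
  · exact one_le_dist_pt_of_fst (by linarith [hx le_rfl])
  · have h : (2 : ℝ) ≤ j := by exact_mod_cast h
    apply one_le_dist_pt_of_snd
    exact le_abs.2 (.inl (by nlinarith [mul_nonneg (sub_nonneg.2 h) (sqrt_nonneg 3)]))

lemma one_le_dist_pt_topBlock {k : ℕ} {x y : ℝ} {a b : ℕ} (hab : (a, b) ∈ tri k)
    (hy : y ≤ 1 / 2 + k * √3 / 2) : 1 ≤ dist (pt x y) (topBlock k (a, b)) := by
  have hab : (a : ℝ) + b + 1 ≤ k := by exact_mod_cast mem_tri.1 hab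
  rw [topBlock_eq]
  apply one_le_dist_pt_of_snd
  rw [abs_sub_comm]
  refine le_abs.2 (.inl ?_)
  rw [side]
  nlinarith [mul_nonneg (sub_nonneg.2 hab) (sqrt_nonneg 3), sq_sqrt_three]

section CrossBlock

variable {k i j a b : ℕ}

lemma one_le_dist_leftBlock_rightBlock (hij : (i, j) ∈ leftIdx k) (hab : (a, b) ∈ tri (k + 1)) :
    1 ≤ dist (leftBlock (i, j)) (rightBlock k (a, b)) := by
  rw [mem_leftIdx] at hij
  have hab : (a : ℝ) + b ≤ k := by exact_mod_cast Nat.lt_succ_iff.1 (mem_tri.1 hab)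
  have hx : (i : ℝ) + j / 2 ≤ k - 1 := by
    rcases le_or_gt j 1 with hj | hj
    · have : (i : ℝ) + j + 1 ≤ k := by exact_mod_cast hij.2 hj
      linarith [j.cast_nonneg (α := ℝ)]
    · have : (i : ℝ) + j ≤ k := by exact_mod_cast hij.1
      have : (2 : ℝ) ≤ j := by exact_mod_cast hj
      linarith
  rw [leftBlock_eq, rightBlock_eq]
  apply one_le_dist_pt_of_fst
  rw [abs_sub_comm]
  exact le_abs.2 (.inl (by
    linarith [b.cast_nonneg (α := ℝ), three_halves_le_sqrt_three, side.eq_1 k]))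

lemma one_le_dist_leftBlock_midBlock (hij : (i, j) ∈ leftIdx k) :
    1 ≤ dist (leftBlock (i, j)) (midBlock k (a, b)) := by
  have hij : (i : ℝ) + j ≤ k := by exact_mod_cast (mem_leftIdx.1 hij).1
  rw [leftBlock_eq]
  apply one_le_dist_pt_midBlock
  rw [abs_sub_comm]
  exact le_abs.2 (.inl (by linarith [a.cast_nonneg (α := ℝ), side.eq_1 k]))

lemma one_le_dist_leftBlock_topBlock (hij : (i, j) ∈ leftIdx k) (hab : (a, b) ∈ tri k) :
    1 ≤ dist (leftBlock (i, j)) (topBlock k (a, b)) := by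
  have hj : (j : ℝ) ≤ k := by exact_mod_cast (mem_leftIdx.1 hij).1.trans' (Nat.le_add_left j i)
  rw [leftBlock_eq]
  exact one_le_dist_pt_topBlock hab (by nlinarith [sqrt_nonneg 3])

lemma one_le_dist_leftBlock_gapPt (hij : (i, j) ∈ leftIdx k) :
    1 ≤ dist (leftBlock (i, j)) (gapPt k) := by
  rw [leftBlock_eq]
  refine one_le_dist_pt_gapPt fun hj => ?_
  have : (i : ℝ) + j + 1 ≤ k := by exact_mod_cast (mem_leftIdx.1 hij).2 hj
  rw [abs_sub_comm]
  exact le_abs.2 (.inl (by linarith [side.eq_1 k]))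

lemma one_le_dist_rightBlock_midBlock (hij : (i, j) ∈ tri (k + 1)) :
    1 ≤ dist (rightBlock k (i, j)) (midBlock k (a, b)) := by
  have hij : (i : ℝ) + j ≤ k := by exact_mod_cast Nat.lt_succ_iff.1 (mem_tri.1 hij)
  rw [rightBlock_eq]
  apply one_le_dist_pt_midBlock
  exact le_abs.2 (.inl (by linarith [b.cast_nonneg (α := ℝ), side.eq_1 k]))

lemma one_le_dist_rightBlock_topBlock (hij : (i, j) ∈ tri (k + 1)) (hab : (a, b) ∈ tri k) :
    1 ≤ dist (rightBlock k (i, j)) (topBlock k (a, b)) := by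
  have hj : (j : ℝ) ≤ k := by
    have := mem_tri.1 hij
    exact_mod_cast (show j ≤ k by omega)
  rw [rightBlock_eq]
  exact one_le_dist_pt_topBlock hab (by nlinarith [sqrt_nonneg 3])

lemma one_le_dist_rightBlock_gapPt (hij : (i, j) ∈ tri (k + 1)) :
    1 ≤ dist (rightBlock k (i, j)) (gapPt k) := by
  have hij : (i : ℝ) + j ≤ k := by exact_mod_cast Nat.lt_succ_iff.1 (mem_tri.1 hij)
  rw [rightBlock_eq]
  exact one_le_dist_pt_gapPt fun _ => le_abs.2 (.inl (by linarith [side.eq_1 k]))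

lemma one_le_dist_midBlock_topBlock (hij : (i, j) ∈ tri k) (hab : (a, b) ∈ tri k) :
    1 ≤ dist (midBlock k (i, j)) (topBlock k (a, b)) := by
  have hij : (i : ℝ) + j + 1 ≤ k := by exact_mod_cast mem_tri.1 hij
  rw [midBlock_eq]
  exact one_le_dist_pt_topBlock hab (by nlinarith [sqrt_nonneg 3])

lemma one_le_dist_midBlock_gapPt : 1 ≤ dist (midBlock k (i, j)) (gapPt k) := by
  have hs := three_halves_le_sqrt_three
  rw [midBlock_eq, gapPt]
  rcases Nat.eq_zero_or_pos (i + j) with h | h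
  · obtain ⟨rfl, rfl⟩ : i = 0 ∧ j = 0 := by omega
    refine one_le_dist_pt (a := 1 / 2) (b := √3 / 2) (by norm_num) (by positivity) ?_ ?_ ?_
    · norm_num [div_pow, sq_sqrt_three]
    · norm_num
    · exact le_abs.2 (.inl (by linarith))
  · have h : (1 : ℝ) ≤ i + j := by exact_mod_cast h
    apply one_le_dist_pt_of_snd
    exact le_abs.2 (.inl (by nlinarith [mul_nonneg (sub_nonneg.2 h) (sqrt_nonneg 3)]))

lemma one_le_dist_topBlock_gapPt (hab : (a, b) ∈ tri k) :
    1 ≤ dist (topBlock k (a, b)) (gapPt k) := by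
  rw [dist_comm, gapPt]
  exact one_le_dist_pt_topBlock hab (by nlinarith [sqrt_nonneg 3, k.cast_nonneg (α := ℝ)])

end CrossBlock

def triangle (k : ℕ) : Set ℝ² :=
  convexHull ℝ {pt 0 0, pt (side k) 0, pt (side k / 2) (side k * √3 / 2)}

lemma pt_mem_triangle {k : ℕ} {x y : ℝ} (hy : 0 ≤ y) (hx₁ : y ≤ √3 * x)
    (hx₂ : y ≤ √3 * (side k - x)) : pt x y ∈ triangle k :=
  pt_mem_convexHull_triangle (side_pos k) hy hx₁ hx₂

section Membership

variable {k i j : ℕ}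

lemma leftBlock_mem_triangle (hij : i + j ≤ k) : leftBlock (i, j) ∈ triangle k := by
  have hij : (i : ℝ) + j ≤ k := by exact_mod_cast hij
  rw [leftBlock_eq]
  apply pt_mem_triangle (by positivity)
  · nlinarith [mul_nonneg (sqrt_nonneg 3) i.cast_nonneg]
  · nlinarith [mul_nonneg (sqrt_nonneg 3) (k.cast_nonneg (α := ℝ)), three_halves_le_sqrt_three,
      side.eq_1 k]

lemma rightBlock_mem_triangle (hij : i + j ≤ k) : rightBlock k (i, j) ∈ triangle k := by
  have hij : (i : ℝ) + j ≤ k := by exact_mod_cast hij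
  rw [rightBlock_eq]
  apply pt_mem_triangle (by positivity)
  · nlinarith [mul_nonneg (sqrt_nonneg 3) (k.cast_nonneg (α := ℝ)), three_halves_le_sqrt_three,
      side.eq_1 k]
  · nlinarith [mul_nonneg (sqrt_nonneg 3) i.cast_nonneg]

lemma midBlock_mem_triangle (hij : i + j < k) : midBlock k (i, j) ∈ triangle k := by
  have hij : (i : ℝ) + j + 1 ≤ k := by exact_mod_cast hij
  rw [midBlock_eq]
  apply pt_mem_triangle (by positivity) <;> rw [side]
  · nlinarith [mul_nonneg (sqrt_nonneg 3) (sub_nonneg.2 hij),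
      mul_nonneg (sqrt_nonneg 3) i.cast_nonneg, sq_sqrt_three]
  · nlinarith [mul_nonneg (sqrt_nonneg 3) (sub_nonneg.2 hij),
      mul_nonneg (sqrt_nonneg 3) j.cast_nonneg, sq_sqrt_three]

lemma topBlock_mem_triangle (hij : i + j < k) : topBlock k (i, j) ∈ triangle k := by
  have hij : (i : ℝ) + j + 1 ≤ k := by exact_mod_cast hij
  rw [topBlock_eq]
  apply pt_mem_triangle <;> rw [side]
  · nlinarith [mul_nonneg (sqrt_nonneg 3) (sub_nonneg.2 hij),
      mul_nonneg (sqrt_nonneg 3) (k.cast_nonneg (α := ℝ)), sq_sqrt_three]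
  · nlinarith [mul_nonneg (sqrt_nonneg 3) i.cast_nonneg]
  · nlinarith [mul_nonneg (sqrt_nonneg 3) j.cast_nonneg]

lemma gapPt_mem_triangle (hk : 1 ≤ k) : gapPt k ∈ triangle k := by
  have hk : (1 : ℝ) ≤ k := by exact_mod_cast hk
  apply pt_mem_triangle (by norm_num) <;> rw [side]
  · nlinarith [mul_nonneg (sqrt_nonneg 3) (sub_nonneg.2 hk), sq_sqrt_three]
  · nlinarith [mul_nonneg (sqrt_nonneg 3) (sub_nonneg.2 hk), sqrt_nonneg 3, sq_sqrt_three]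

end Membership

abbrev Index (k : ℕ) := leftIdx k ⊕ tri (k + 1) ⊕ tri k ⊕ tri k ⊕ Unit

noncomputable def config (k : ℕ) : Index k → ℝ²
  | .inl p => leftBlock p
  | .inr (.inl p) => rightBlock k p
  | .inr (.inr (.inl p)) => midBlock k p
  | .inr (.inr (.inr (.inl p))) => topBlock k p
  | .inr (.inr (.inr (.inr _))) => gapPt k

lemma card_index {k : ℕ} (hk : 1 ≤ k) : Fintype.card (Index k) = 2 * (k + 1) ^ 2 - 1 := by
  simp only [Fintype.card_sum, Fintype.card_coe, Fintype.card_unit, card_leftIdx hk]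
  have h₁ := two_mul_card_tri (k + 1)
  have h₀ := two_mul_card_tri k
  have h₂ : 2 ≤ #(tri (k + 1)) := by nlinarith
  have h₃ : 1 ≤ 2 * (k + 1) ^ 2 := by nlinarith
  zify [h₂, h₃] at h₁ h₀ ⊢
  linear_combination h₁ + h₀

lemma config_mem_triangle {k : ℕ} (hk : 1 ≤ k) (x : Index k) : config k x ∈ triangle k := by
  rcases x with ⟨⟨i, j⟩, h⟩ | ⟨⟨i, j⟩, h⟩ | ⟨⟨i, j⟩, h⟩ | ⟨⟨i, j⟩, h⟩ | _
  · exact leftBlock_mem_triangle (mem_leftIdx.1 h).1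
  · exact rightBlock_mem_triangle (Nat.lt_succ_iff.1 (mem_tri.1 h))
  · exact midBlock_mem_triangle (mem_tri.1 h)
  · exact topBlock_mem_triangle (mem_tri.1 h)
  · exact gapPt_mem_triangle hk

lemma one_le_dist_config {k : ℕ} {x y : Index k} (hxy : x ≠ y) :
    1 ≤ dist (config k x) (config k y) := by
  rcases x with ⟨⟨i, j⟩, h⟩ | ⟨⟨i, j⟩, h⟩ | ⟨⟨i, j⟩, h⟩ | ⟨⟨i, j⟩, h⟩ | _ <;>
    rcases y with ⟨⟨a, b⟩, h'⟩ | ⟨⟨a, b⟩, h'⟩ | ⟨⟨a, b⟩, h'⟩ | ⟨⟨a, b⟩, h'⟩ | _ <;>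
    simp only [config]
  · exact one_le_dist_leftBlock (by rintro ⟨⟩; exact hxy rfl)
  · exact one_le_dist_leftBlock_rightBlock h h'
  · exact one_le_dist_leftBlock_midBlock h
  · exact one_le_dist_leftBlock_topBlock h h'
  · exact one_le_dist_leftBlock_gapPt h
  · rw [dist_comm]; exact one_le_dist_leftBlock_rightBlock h' h
  · exact one_le_dist_rightBlock k (by rintro ⟨⟩; exact hxy rfl)
  · exact one_le_dist_rightBlock_midBlock h
  · exact one_le_dist_rightBlock_topBlock h h'
  · exact one_le_dist_rightBlock_gapPt h
  · rw [dist_comm]; exact one_le_dist_leftBlock_midBlock h'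
  · rw [dist_comm]; exact one_le_dist_rightBlock_midBlock h'
  · exact one_le_dist_midBlock k (by rintro ⟨⟩; exact hxy rfl)
  · exact one_le_dist_midBlock_topBlock h h'
  · exact one_le_dist_midBlock_gapPt
  · rw [dist_comm]; exact one_le_dist_leftBlock_topBlock h' h
  · rw [dist_comm]; exact one_le_dist_rightBlock_topBlock h' h
  · rw [dist_comm]; exact one_le_dist_midBlock_topBlock h' h
  · exact one_le_dist_topBlock k (by rintro ⟨⟩; exact hxy rfl)
  · exact one_le_dist_topBlock_gapPt h
  · rw [dist_comm]; exact one_le_dist_leftBlock_gapPt h'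
  · rw [dist_comm]; exact one_le_dist_rightBlock_gapPt h'
  · rw [dist_comm]; exact one_le_dist_midBlock_gapPt
  · rw [dist_comm]; exact one_le_dist_topBlock_gapPt h'
  · exact absurd rfl hxy

end TriangularPacking

/-- **Packings of `2Δ(k+1) + 2Δ(k) − 1 = 2(k+1)² − 1` points.**
For every integer `k ≥ 1` there exist `2(k+1)² − 1` points lying in a closed
equilateral triangle of side length `2k − 1 + √3` (the convex hull of three
points at pairwise distance `2k − 1 + √3`) such that every two distinct points
among them are at distance at least `1`. -/
theorem two_two_triangular_packing (k : ℕ) (hk : 1 ≤ k) :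
    ∃ (a b c : EuclideanSpace ℝ (Fin 2))
      (P : Fin (2 * (k + 1) ^ 2 - 1) → EuclideanSpace ℝ (Fin 2)),
      dist a b = 2 * (k : ℝ) - 1 + Real.sqrt 3 ∧
      dist a c = 2 * (k : ℝ) - 1 + Real.sqrt 3 ∧
      dist b c = 2 * (k : ℝ) - 1 + Real.sqrt 3 ∧
      (∀ i, P i ∈ convexHull ℝ ({a, b, c} : Set (EuclideanSpace ℝ (Fin 2)))) ∧
      (∀ i j, i ≠ j → 1 ≤ dist (P i) (P j)) := by
  let e := (Fintype.equivFinOfCardEq (TriangularPacking.card_index hk)).symm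
  obtain ⟨hab, hac, hbc⟩ := TriangularPacking.dist_vertices_equilateral
    (TriangularPacking.side_pos k).le
  exact ⟨_, _, _, TriangularPacking.config k ∘ e, hab, hac, hbc,
    fun i => TriangularPacking.config_mem_triangle hk (e i),
    fun i j hij => TriangularPacking.one_le_dist_config (e.injective.ne hij)⟩
end

section
/- The map (k, p) ↦ n_p(k) := Δ((k+1)(p+1) − 2) + k, defined on pairs of integers k ≥ 1, p ≥ 1, is injective: if Δ((k+1)(p+1) − 2) + k = Δ((k'+1)(p'+1) − 2) + k' with k, k', p, p' ≥ 1, then k = k' and p = p'. -/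
/-- The `m`-th triangular number `Δ(m) = m(m+1)/2`. -/
def tri (m : ℕ) : ℕ := m * (m + 1) / 2

lemma two_tri (m : ℕ) : 2 * tri m = m * (m + 1) := by
  unfold tri
  exact Nat.mul_div_cancel' (Nat.even_mul_succ_self m).two_dvd

/-- **Uniqueness of the representation `n_p(k) = Δ((k+1)(p+1) − 2) + k`.**
The map `(k, p) ↦ Δ((k+1)(p+1) − 2) + k` on pairs of integers `k, p ≥ 1`
is injective. -/
theorem matrix_index_injective (k k' p p' : ℕ)
    (hk : 1 ≤ k) (hk' : 1 ≤ k') (hp : 1 ≤ p) (hp' : 1 ≤ p')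
    (h : tri ((k + 1) * (p + 1) - 2) + k = tri ((k' + 1) * (p' + 1) - 2) + k') :
    k = k' ∧ p = p' := by
  set m := (k + 1) * (p + 1) - 2 with hm
  set m' := (k' + 1) * (p' + 1) - 2 with hm'
  have hmk : 2 * k ≤ m := by
    have : 2 * (k + 1) ≤ (k + 1) * (p + 1) := by nlinarith
    omega
  have hmk' : 2 * k' ≤ m' := by
    have : 2 * (k' + 1) ≤ (k' + 1) * (p' + 1) := by nlinarith
    omega
  have h2 : m * (m + 1) + 2 * k = m' * (m' + 1) + 2 * k' := by
    have := two_tri m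
    have := two_tri m'
    omega
  have hmm : m = m' := by
    rcases lt_trichotomy m m' with hlt | he | hgt
    · nlinarith
    · exact he
    · nlinarith
  have hkk : k = k' := by nlinarith
  refine ⟨hkk, ?_⟩
  have hprod : (k + 1) * (p + 1) = (k' + 1) * (p' + 1) := by
    have h1 : 2 ≤ (k + 1) * (p + 1) := by nlinarith
    have h2 : 2 ≤ (k' + 1) * (p' + 1) := by nlinarith
    omega
  rw [← hkk] at hprod
  have := Nat.eq_of_mul_eq_mul_left (show 0 < k + 1 by omega) hprod
  omega
end

section
/- There exist 106 points lying in a closed equilateral triangle of side length 1 in the Euclidean plane such that every two distinct points among them are at distance at least 0.074298299906302. -/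
/-!
The points are an explicit arrangement, mostly a triangular lattice of spacing `d(106)`,
stored as integers at scale `10 ^ 17`. In oblique coordinates `(x, q) ↦ (x, √3 q)` the
triangle with vertices `(0, 0)`, `(1, 0)`, `(1/2, √3/2)` is `0 ≤ q ≤ x, x + q ≤ 1`, and squared
distances are `Δx² + 3 Δq²`, so both membership and separation become integer inequalities,
which are checked by evaluation.
-/

open Real

theorem smul_add_smul_add_smul_mem_convexHull {𝕜 E : Type*} [Field 𝕜] [LinearOrder 𝕜]
    [IsStrictOrderedRing 𝕜] [AddCommGroup E] [Module 𝕜 E] {a b c : E} {α β γ : 𝕜}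
    (hα : 0 ≤ α) (hβ : 0 ≤ β) (hγ : 0 ≤ γ) (hsum : α + β + γ = 1) :
    α • a + β • b + γ • c ∈ convexHull 𝕜 {a, b, c} := by
  have h := (convex_convexHull 𝕜 ({a, b, c} : Set E)).sum_mem (t := Finset.univ)
    (w := ![α, β, γ]) (z := ![a, b, c])
    (fun i _ => by fin_cases i <;> assumption)
    (by simpa [Fin.sum_univ_three] using hsum)
    (fun i _ => subset_convexHull 𝕜 _ (by fin_cases i <;> simp))
  simpa [Fin.sum_univ_three] using h

noncomputable def triPoint (x q : ℝ) : EuclideanSpace ℝ (Fin 2) := !₂[x, √3 * q]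

theorem dist_triPoint (x q x' q' : ℝ) :
    dist (triPoint x q) (triPoint x' q') = √((x - x') ^ 2 + 3 * (q - q') ^ 2) := by
  rw [EuclideanSpace.dist_eq, Fin.sum_univ_two]
  simp only [triPoint, PiLp.toLp_apply, Matrix.cons_val_zero, Matrix.cons_val_one,
    Real.dist_eq, sq_abs]
  congr 1
  linear_combination (q - q') ^ 2 * Real.sq_sqrt (show (0 : ℝ) ≤ 3 by norm_num)

theorem triPoint_mem_convexHull {x q : ℝ} (h₀ : 0 ≤ q) (h₁ : q ≤ x) (h₂ : x + q ≤ 1) :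
    triPoint x q ∈ convexHull ℝ {triPoint 0 0, triPoint 1 0, triPoint (1 / 2) (1 / 2)} := by
  have hbary : triPoint x q = (1 - x - q) • triPoint 0 0 + (x - q) • triPoint 1 0 +
      (2 * q) • triPoint (1 / 2) (1 / 2) := by
    ext j
    fin_cases j <;> simp [triPoint] <;> ring
  rw [hbary]
  exact smul_add_smul_add_smul_mem_convexHull (by linarith) (by linarith) (by linarith) (by ring)

theorem div_le_dist_triPoint_div {N D : ℝ} (hN : 0 < N) {x q x' q' : ℝ}
    (h : D ^ 2 ≤ (x - x') ^ 2 + 3 * (q - q') ^ 2) :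
    D / N ≤ dist (triPoint (x / N) (q / N)) (triPoint (x' / N) (q' / N)) := by
  rw [dist_triPoint]
  apply Real.le_sqrt_of_sq_le
  rw [← sub_div, ← sub_div, div_pow, div_pow, div_pow, mul_div_assoc', ← add_div]
  gcongr

namespace Packing106

-- The packing t106a of the paper, in the coordinates of `triPoint`, scaled by `10 ^ 17`.
def xNumerators : Array ℤ := #[0, 7429829990630253, 14859659981260506, 22289489971890759, 29719319962521011, 37149149953151264, 44578979943781517, 52008809934411770, 59438639925042023, 66868469915672276, 74298299906302529, 81728129896932782, 89157959887563034, 100000000000000000, 3714914995315126, 11144744985945379, 18574574976575632, 26004404967205885, 33434234957836138, 40864064948466391, 48293894939096644, 55723724929726896, 63153554920357149, 70583384910987402, 78013214901617655, 87049666253571859, 94578979943781517, 7429829990630253, 14859659981260506, 22289489971890759, 29719319962521011, 37149149953151264, 44578979943781517, 52008809934411770, 59438639925042023, 66868469915672276, 74298299906302529, 81728129896932782, 87551017517966068, 11144744985945379, 18574574976575632, 26004404967205885, 33434234957836138, 40864064948466391, 48293894939096644, 55723724929726896, 63153554920357149, 70583384910987402, 78722155050973990, 85744876989115051, 14859659981260506,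 22289489971890759, 29719319962521011, 37149149953151264, 44578979943781517, 52008809934411770, 59438639925042023, 66868469915672276, 74298299906302529, 80450534988479180, 18574574976575632, 26004404967205885, 33434234957836138, 40864064948466391, 48293894939096644, 55723724929726896, 63153554920357149, 71072394697449280, 78583369121384717, 22289489971890759, 29719319962521011, 37149149953151264, 44578979943781517, 52008809934411770, 59438639925042023, 66868469915672276, 73302891433357573, 26004404967205885, 33434234957836138, 40864064948466391, 48293894939096644, 55723724929726896, 63549219706275520, 71416630878615283, 29719319962521011, 37149149953151264, 44578979943781517, 52008809934411770, 59438639925042023, 66122288877979412, 33434234957836138, 40864064948466391, 48293894939096644, 55999918744802370, 64255123010884949, 37149149953151264, 44578979943781517, 52008809934411770, 58916785376464006, 40864064948466391, 48818899242766730, 57110644847612989, 44578979943781517, 51689624791394506, 50000000000000000, 92889355152387011]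

def qNumerators : Array ℤ := #[0, 0, 0, 0, 0, 0, 0, 0, 0, 0, 0, 0, 0, 0, 3714914995315126, 3714914995315126, 3714914995315126, 3714914995315126, 3714914995315126, 3714914995315126, 3714914995315126, 3714914995315126, 3714914995315126, 3714914995315126, 3714914995315126, 4250455449089777, 2933423213002498, 7429829990630253, 7429829990630253, 7429829990630253, 7429829990630253, 7429829990630253, 7429829990630253, 7429829990630253, 7429829990630253, 7429829990630253, 7429829990630253, 7429829990630253, 10094184411653981, 11144744985945379, 11144744985945379, 11144744985945379, 11144744985945379, 11144744985945379, 11144744985945379, 11144744985945379, 11144744985945379, 11144744985945379, 11382101219051419, 14255123010884949, 14859659981260506, 14859659981260506, 14859659981260506, 14859659981260506, 14859659981260506, 14859659981260506, 14859659981260506, 14859659981260506, 14859659981260506, 17264680922493215, 18574574976575632, 18574574976575632, 18574574976575632, 18574574976575632, 18574574976575632, 18574574976575632, 18574574976575632, 18739333813752900, 21416630878615283, 22289489971890759, 22289489971890759, 22289489971890759, 22289489971890759, 22289489971890759, 22289489971890759, 22289489971890759, 24434297144452524, 26004404967205885, 26004404967205885, 26004404967205885, 26004404967205885, 26004404967205885,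 26138369638717175, 28583369121384717, 29719319962521011, 29719319962521011, 29719319962521011, 29719319962521011, 29719319962521011, 31592927032992983, 33434234957836138, 33434234957836138, 33434234957836138, 33530436807811179, 35744876989115051, 37149149953151264, 37149149953151264, 37149149953151264, 38728416553156043, 40864064948466391, 41048520004048258, 42889355152387011, 44578979943781517, 45822778365389509, 50000000000000000, 7110644847612989]

def x (i : Fin 106) : ℤ := xNumerators[(i : ℕ)]!

def q (i : Fin 106) : ℤ := qNumerators[(i : ℕ)]!

noncomputable def point (i : Fin 106) : EuclideanSpace ℝ (Fin 2) :=
  triPoint (x i / 10 ^ 17) (q i / 10 ^ 17)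

set_option maxRecDepth 100000 in
theorem coords_mem_triangle : ∀ i, 0 ≤ q i ∧ q i ≤ x i ∧ x i + q i ≤ 10 ^ 17 := by
  decide

set_option maxRecDepth 100000 in
theorem separation_sq_le : ∀ i j, i ≠ j →
    (7429829990630200 : ℤ) ^ 2 ≤ (x i - x j) ^ 2 + 3 * (q i - q j) ^ 2 := by
  decide

theorem point_mem_convexHull (i : Fin 106) :
    point i ∈ convexHull ℝ {triPoint 0 0, triPoint 1 0, triPoint (1 / 2) (1 / 2)} := by
  obtain ⟨h₀, h₁, h₂⟩ := coords_mem_triangle i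
  apply triPoint_mem_convexHull
  · positivity
  · gcongr
  · rw [← add_div, div_le_one (by positivity)]
    exact_mod_cast h₂

theorem le_dist_point {i j : Fin 106} (hij : i ≠ j) :
    (0.074298299906302 : ℝ) ≤ dist (point i) (point j) := by
  rw [show (0.074298299906302 : ℝ) = 7429829990630200 / 10 ^ 17 by norm_num]
  exact div_le_dist_triPoint_div (by positivity) (by exact_mod_cast separation_sq_le i j hij)

end Packing106

/-- **Packing of 106 points in a unit equilateral triangle.**
There exist 106 points lying in a closed equilateral triangle of side length
`1` in the Euclidean plane (the convex hull of three points at pairwise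
distance `1`) such that every two distinct points among them are at distance
at least `0.074298299906302`. -/
theorem packing_106 :
    ∃ (a b c : EuclideanSpace ℝ (Fin 2))
      (P : Fin 106 → EuclideanSpace ℝ (Fin 2)),
      dist a b = 1 ∧ dist a c = 1 ∧ dist b c = 1 ∧
      (∀ i, P i ∈ convexHull ℝ ({a, b, c} : Set (EuclideanSpace ℝ (Fin 2)))) ∧
      (∀ i j, i ≠ j → (0.074298299906302 : ℝ) ≤ dist (P i) (P j)) := by
  refine ⟨triPoint 0 0, triPoint 1 0, triPoint (1 / 2) (1 / 2), Packing106.point,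
    ?_, ?_, ?_, Packing106.point_mem_convexHull, fun i j => Packing106.le_dist_point⟩ <;>
  · rw [dist_triPoint]
    norm_num
end

section
/- There exist 254 points lying in a closed equilateral triangle of side length 1 in the Euclidean plane such that every two distinct points among them are at distance at least 0.046717039648104. -/
/-!
Write points of the plane in oblique coordinates `(u, v) ↦ u • e₁ + v • e₂`, where `e₁, e₂` are
unit vectors at angle `π / 3`. The triangle spanned by `0, e₁, e₂` is then `u, v ≥ 0, u + v ≤ 1`,
and squared distances are given by the form `u² + u v + v²`, which is at least `1` on nonzero
integer vectors. The packing consists of the triangular patch of `Δ(21) = 231` lattice points of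
spacing `d(254)` at the vertex `0`, and of `23` points zig-zagging along the opposite side from
`e₁` to `e₂`. Lattice pairs are separated by the lattice bound; the pairs involving the side
points are checked in exact integer arithmetic.
-/

theorem List.Pairwise.rel_get_of_ne {α : Type*} {R : α → α → Prop} [Std.Symm R] {l : List α}
    (h : l.Pairwise R) {a b : Fin l.length} (hab : a ≠ b) : R (l.get a) (l.get b) := by
  rcases hab.lt_or_gt with hab | hab
  · exact h.rel_get_of_lt hab
  · exact symm (h.rel_get_of_lt hab)

namespace TrianglePacking

noncomputable def oblique (u v : ℝ) : EuclideanSpace ℝ (Fin 2) := !₂[u + v / 2, √3 / 2 * v]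

lemma dist_oblique (u v u' v' : ℝ) :
    dist (oblique u v) (oblique u' v') = √((u - u') ^ 2 + (u - u') * (v - v') + (v - v') ^ 2) := by
  rw [EuclideanSpace.dist_eq]
  congr 1
  simp only [oblique, Fin.sum_univ_two, Real.dist_eq, sq_abs, PiLp.toLp_apply,
    Matrix.cons_val_zero, Matrix.cons_val_one, Matrix.cons_val_fin_one]
  linear_combination (v - v') ^ 2 / 4 * Real.sq_sqrt (show (0 : ℝ) ≤ 3 by norm_num)

lemma oblique_add (u v u' v' : ℝ) : oblique u v + oblique u' v' = oblique (u + u') (v + v') := by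
  ext i
  fin_cases i <;> simp only [oblique, PiLp.add_apply, Fin.isValue, Fin.zero_eta,
    Fin.mk_one, Matrix.cons_val_zero, Matrix.cons_val_one, Matrix.cons_val_fin_one] <;> ring

lemma smul_oblique (t u v : ℝ) : t • oblique u v = oblique (t * u) (t * v) := by
  ext i
  fin_cases i <;> simp only [oblique, PiLp.smul_apply, smul_eq_mul, Fin.isValue, Fin.zero_eta,
    Fin.mk_one, Matrix.cons_val_zero, Matrix.cons_val_one, Matrix.cons_val_fin_one] <;> ring

lemma oblique_mem_convexHull {u v : ℝ} (hu : 0 ≤ u) (hv : 0 ≤ v) (huv : u + v ≤ 1) :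
    oblique u v ∈ convexHull ℝ {oblique 0 0, oblique 1 0, oblique 0 1} := by
  set T : Set (EuclideanSpace ℝ (Fin 2)) := {oblique 0 0, oblique 1 0, oblique 0 1}
  have hw₀ : ∀ i ∈ Finset.univ, 0 ≤ ![1 - u - v, u, v] i := by
    intro i _
    fin_cases i <;> simp only [Fin.isValue, Fin.zero_eta, Fin.mk_one, Fin.reduceFinMk,
      Matrix.cons_val] <;> linarith
  have hw₁ : ∑ i, ![1 - u - v, u, v] i = 1 := by
    simp only [Fin.sum_univ_three, Fin.isValue, Matrix.cons_val]; ring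
  have hz : ∀ i ∈ Finset.univ, ![oblique 0 0, oblique 1 0, oblique 0 1] i ∈ convexHull ℝ T := by
    intro i _
    fin_cases i <;> apply subset_convexHull <;> simp [T]
  simpa [Fin.sum_univ_three, smul_oblique, oblique_add] using
    (convex_convexHull ℝ T).sum_mem hw₀ hw₁ hz

def obliqueNormSq (p : ℤ × ℤ) : ℤ := p.1 ^ 2 + p.1 * p.2 + p.2 ^ 2

lemma obliqueNormSq_sub_comm (p q : ℤ × ℤ) : obliqueNormSq (p - q) = obliqueNormSq (q - p) := by
  simp only [obliqueNormSq, Prod.fst_sub, Prod.snd_sub]; ring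

lemma obliqueNormSq_smul (d : ℤ) (p : ℤ × ℤ) : obliqueNormSq (d • p) = d ^ 2 * obliqueNormSq p := by
  simp only [obliqueNormSq, Prod.smul_fst, Prod.smul_snd, smul_eq_mul]; ring

lemma one_le_obliqueNormSq {p : ℤ × ℤ} (hp : p ≠ 0) : 1 ≤ obliqueNormSq p := by
  obtain ⟨m, n⟩ := p
  suffices 0 < m ^ 2 + m * n + n ^ 2 from this
  have hmn : m ≠ 0 ∨ n ≠ 0 := by simpa [Prod.ext_iff, or_iff_not_imp_left] using hp
  -- `4 (m² + m n + n²) = (2 m + n)² + 3 n² = (m + 2 n)² + 3 m²`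
  rcases hmn with hm | hn
  · nlinarith [sq_nonneg (m + 2 * n), pow_pos (abs_pos.2 hm) 2, sq_abs m]
  · nlinarith [sq_nonneg (2 * m + n), pow_pos (abs_pos.2 hn) 2, sq_abs n]

noncomputable def site (p : ℤ × ℤ) : EuclideanSpace ℝ (Fin 2) :=
  oblique (p.1 / 10 ^ 18) (p.2 / 10 ^ 18)

def InTriangle (p : ℤ × ℤ) : Prop := 0 ≤ p.1 ∧ 0 ≤ p.2 ∧ p.1 + p.2 ≤ 10 ^ 18

instance : DecidablePred InTriangle := fun _ => by unfold InTriangle; infer_instance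

lemma site_mem_convexHull {p : ℤ × ℤ} (hp : InTriangle p) :
    site p ∈ convexHull ℝ {oblique 0 0, oblique 1 0, oblique 0 1} := by
  obtain ⟨h₁, h₂, h₁₂⟩ := hp
  apply oblique_mem_convexHull <;> try positivity
  rw [← add_div, div_le_one (by positivity)]
  exact_mod_cast h₁₂

def Separated (p q : ℤ × ℤ) : Prop := 46717039648104000 ^ 2 ≤ obliqueNormSq (p - q)

instance : DecidableRel Separated := fun _ _ => by unfold Separated; infer_instance

instance : Std.Symm Separated where
  symm p q h := by rwa [Separated, obliqueNormSq_sub_comm]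

lemma le_dist_site {p q : ℤ × ℤ} (h : Separated p q) :
    (0.046717039648104 : ℝ) ≤ dist (site p) (site q) := by
  have h' : ((46717039648104000 : ℤ) : ℝ) ^ 2 ≤ (obliqueNormSq (p - q) : ℝ) := by exact_mod_cast h
  simp only [obliqueNormSq, Prod.fst_sub, Prod.snd_sub, Int.cast_add, Int.cast_mul, Int.cast_pow,
    Int.cast_sub] at h'
  rw [site, site, dist_oblique, Real.le_sqrt' (by norm_num)]
  calc (0.046717039648104 : ℝ) ^ 2 = (46717039648104000 : ℝ) ^ 2 / 10 ^ 36 := by norm_num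
    _ ≤ ((p.1 - q.1) ^ 2 + (p.1 - q.1) * (p.2 - q.2) + (p.2 - q.2) ^ 2 : ℝ) / 10 ^ 36 := by
      gcongr; exact_mod_cast h'
    _ = _ := by ring

lemma separated_smul {d : ℤ} (hd : 46717039648104000 ≤ d) {p q : ℤ × ℤ} (hpq : p ≠ q) :
    Separated (d • p) (d • q) := by
  rw [Separated, ← smul_sub, obliqueNormSq_smul]
  have := one_le_obliqueNormSq (sub_ne_zero.2 hpq)
  have : (46717039648104000 : ℤ) ^ 2 ≤ d ^ 2 := by gcongr
  nlinarith

def triangleIndices (n : ℕ) : List (ℤ × ℤ) :=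
  (List.range n).flatMap fun j => (List.range (n - j)).map fun (k : ℕ) => ((j : ℤ), (k : ℤ))

lemma nodup_triangleIndices (n : ℕ) : (triangleIndices n).Nodup := by
  refine List.nodup_flatMap.2 ⟨fun j _ => ?_, List.nodup_range.pairwise_of_forall_ne ?_⟩
  · exact List.nodup_range.map fun k k' h => by simpa using h
  · intro j _ j' _ hjj' p hp hp'
    simp only [List.mem_map] at hp hp'
    obtain ⟨k, -, rfl⟩ := hp
    obtain ⟨k', -, h⟩ := hp'
    exact hjj' (by simpa using congrArg Prod.fst h.symm)

def latticeSites : List (ℤ × ℤ) := (triangleIndices 21).map (46717039648104176 • ·)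

def sideSites : List (ℤ × ℤ) := [
  (1000000000000000000, 0),
  (947980999006824023, 38378794948435478),
  (909602204058388544, 90397795941611456),
  (857806700545236943, 129349327049274154),
  (818855169437574246, 181144830562425754),
  (767215181779617210, 220472805347012384),
  (727887206995030582, 272112793004969418),
  (676349926170406119, 311680466259672606),
  (636782252915702930, 363217747084297070),
  (585303587607367323, 402919244937201446),
  (545602089754462948, 454397910245537052),
  (494142491897617127, 494142491897617128),
  (454397910245537052, 545602089754462948),
  (402919244937201445, 585303587607367324),
  (363217747084297070, 636782252915702930),
  (311680466259672607, 676349926170406118),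
  (272112793004969418, 727887206995030582),
  (220472805347012384, 767215181779617210),
  (181144830562425754, 818855169437574246),
  (129349327049274153, 857806700545236944),
  (90397795941611456, 909602204058388544),
  (38378794948435478, 947980999006824022),
  (0, 1000000000000000000)]

def sites : List (ℤ × ℤ) := sideSites ++ latticeSites

set_option maxRecDepth 100000 in
lemma length_sites : sites.length = 254 := by decide

set_option maxRecDepth 100000 in
lemma inTriangle_of_mem_sites : ∀ p ∈ sites, InTriangle p := by decide

lemma pairwise_separated_latticeSites : latticeSites.Pairwise Separated :=
  List.pairwise_map.2 <| (nodup_triangleIndices 21).imp (separated_smul (by norm_num))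

set_option maxRecDepth 100000 in
lemma pairwise_separated_sites : sites.Pairwise Separated :=
  List.pairwise_append.2 ⟨by decide, pairwise_separated_latticeSites, by decide⟩

end TrianglePacking

open TrianglePacking in
/-- **Packing of 254 points in a unit equilateral triangle.**
There exist 254 points lying in a closed equilateral triangle of side length
`1` in the Euclidean plane (the convex hull of three points at pairwise
distance `1`) such that every two distinct points among them are at distance
at least `0.046717039648104`. -/
theorem packing_254 :
    ∃ (a b c : EuclideanSpace ℝ (Fin 2))
      (P : Fin 254 → EuclideanSpace ℝ (Fin 2)),
      dist a b = 1 ∧ dist a c = 1 ∧ dist b c = 1 ∧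
      (∀ i, P i ∈ convexHull ℝ ({a, b, c} : Set (EuclideanSpace ℝ (Fin 2)))) ∧
      (∀ i j, i ≠ j → (0.046717039648104 : ℝ) ≤ dist (P i) (P j)) := by
  refine ⟨oblique 0 0, oblique 1 0, oblique 0 1,
    fun i => site (sites.get (i.cast length_sites.symm)), ?_, ?_, ?_,
    fun i => site_mem_convexHull (inTriangle_of_mem_sites _ (List.get_mem _ _)),
    fun i j hij => le_dist_site (pairwise_separated_sites.rel_get_of_ne ?_)⟩
  · simp [dist_oblique]
  · simp [dist_oblique]
  · norm_num [dist_oblique]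
  · exact (Fin.cast_injective _).ne hij
end
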